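/- Let h : ℝ → ℝ be continuous and periodic with period T > 0. Then the set of sampling intervals Δt ∈ (0, ∞) for which it is NOT the case that for every shift s ∈ ℝ and every continuous g : ℝ → ℝ the sample averages (1/N) ∑_{n=0}^{N-1} g(h(n·Δt + s)) converge to (1/T) ∫_0^T g(h(t)) dt, has Lebesgue measure zero. In other words, every periodic signal has sampling stationarity with respect to all sampling intervals except for a set of intervals of Lebesgue measure zero. -/

import Mathlib

/-!
For `Δt / T` irrational the rotation by `Δt` of the circle `ℝ / Tℤ` is uniquely ergodic (Weyl).
Along an orbit, the Birkhoff averages of a character `e_k`, `k ≠ 0`, are `e_k(x)` times the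
Cesàro means of the powers of `z = e_k(Δt) ≠ 1`, a bounded geometric sum divided by `N`, hence
tend to `0 = ∫ e_k`. Birkhoff averages and the Haar integral are both `1`-Lipschitz in the
observable, so the observables for which averages tend to the integral form a closed subspace;
it contains the dense span of the characters, hence everything. A continuous `T`-periodic waveform
composed with a continuous `g` is such an observable, so sampling fails to be stationary only for
`Δt` in the countable set `ℚ T`.
-/

open Filter MeasureTheory Topology

theorem tendsto_inv_mul_geom_sum_of_norm_le_one {𝕜 : Type*} [RCLike 𝕜] {z : 𝕜}
    (hz : ‖z‖ ≤ 1) (hz1 : z ≠ 1) :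
    Tendsto (fun n : ℕ => (n : 𝕜)⁻¹ * ∑ j ∈ Finset.range n, z ^ j) atTop (𝓝 0) := by
  refine (tendsto_inv_atTop_nhds_zero_nat (𝕜 := 𝕜)).zero_mul_isBoundedUnder_le
    ⟨2 / ‖z - 1‖, eventually_map.mpr <| Eventually.of_forall fun n => ?_⟩
  have hpow : ‖z ^ n - 1‖ ≤ 2 := by
    calc ‖z ^ n - 1‖ ≤ ‖z ^ n‖ + ‖(1 : 𝕜)‖ := norm_sub_le _ _
      _ ≤ 1 + 1 := by rw [norm_pow, norm_one]; gcongr; exact pow_le_one₀ (norm_nonneg z) hz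
      _ = 2 := by norm_num
  simp only [Function.comp_apply, geom_sum_eq hz1, norm_div]
  gcongr

section BirkhoffAverage

variable {𝕜 X E : Type*} [RCLike 𝕜] [NormedAddCommGroup E] [NormedSpace 𝕜 E]

theorem norm_birkhoffAverage_le {f : X → X} {g : X → E} {C : ℝ} (hg : ∀ y, ‖g y‖ ≤ C)
    (n : ℕ) (x : X) : ‖birkhoffAverage 𝕜 f g n x‖ ≤ C := by
  rcases eq_or_ne n 0 with rfl | hn
  · simpa using (norm_nonneg _).trans (hg x)
  calc ‖birkhoffAverage 𝕜 f g n x‖ ≤ (n : ℝ)⁻¹ * ∑ k ∈ Finset.range n, ‖g (f^[k] x)‖ := by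
        rw [birkhoffAverage, birkhoffSum, norm_smul, norm_inv, RCLike.norm_natCast]
        gcongr
        exact norm_sum_le _ _
    _ ≤ (n : ℝ)⁻¹ * ∑ _k ∈ Finset.range n, C := by gcongr; exact hg _
    _ = C := by simp [hn]

variable [TopologicalSpace X] [CompactSpace X]

theorem lipschitzWith_birkhoffAverage_apply (f : X → X) (n : ℕ) (x : X) :
    LipschitzWith 1 fun g : C(X, E) => birkhoffAverage 𝕜 f g n x := by
  refine LipschitzWith.of_dist_le_mul fun g g' => ?_
  have hsub : birkhoffAverage 𝕜 f g n x - birkhoffAverage 𝕜 f g' n x =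
      birkhoffAverage 𝕜 f ⇑(g - g') n x := by
    rw [ContinuousMap.coe_sub, birkhoffAverage_sub]; rfl
  rw [NNReal.coe_one, one_mul, dist_eq_norm, dist_eq_norm, hsub]
  exact norm_birkhoffAverage_le (ContinuousMap.norm_coe_le_norm _) n x

variable [MeasurableSpace X] [OpensMeasurableSpace X] (μ : Measure X)

theorem ContinuousMap.integrable [IsFiniteMeasure μ] (g : C(X, 𝕜)) : Integrable g μ :=
  g.continuous.integrable_of_hasCompactSupport (HasCompactSupport.of_compactSpace _)

variable [IsProbabilityMeasure μ]

theorem lipschitzWith_integral_continuousMap :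
    LipschitzWith 1 fun g : C(X, 𝕜) => ∫ y, g y ∂μ := by
  refine LipschitzWith.of_dist_le_mul fun g g' => ?_
  rw [NNReal.coe_one, one_mul, dist_eq_norm, dist_eq_norm,
    ← integral_sub (g.integrable μ) (g'.integrable μ)]
  simpa using norm_integral_le_of_norm_le_const (μ := μ)
    (Eventually.of_forall fun y => (g - g').norm_coe_le_norm y)

variable (𝕜)

def birkhoffAverageTendstoIntegralSubmodule (f : X → X) (x : X) : Submodule 𝕜 C(X, 𝕜) where
  carrier := {g | Tendsto (birkhoffAverage 𝕜 f g · x) atTop (𝓝 (∫ y, g y ∂μ))}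
  zero_mem' := by simp [birkhoffAverage, birkhoffSum]
  add_mem' {g g'} hg hg' := by
    simp only [Set.mem_ofPred_eq, ContinuousMap.coe_add, birkhoffAverage_add, Pi.add_apply,
      integral_add (g.integrable μ) (g'.integrable μ)] at hg hg' ⊢
    exact hg.add hg'
  smul_mem' c g hg := by
    simp only [Set.mem_ofPred_eq, ContinuousMap.coe_smul, Pi.smul_apply, smul_eq_mul,
      integral_const_mul] at hg ⊢
    convert hg.const_mul c using 1
    ext n
    simp only [birkhoffAverage, birkhoffSum, Pi.smul_apply, smul_eq_mul, Finset.mul_sum]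
    exact Finset.sum_congr rfl fun _ _ => mul_left_comm _ _ _

theorem isClosed_birkhoffAverageTendstoIntegralSubmodule (f : X → X) (x : X) :
    IsClosed (birkhoffAverageTendstoIntegralSubmodule 𝕜 μ f x : Set C(X, 𝕜)) :=
  (LipschitzWith.uniformEquicontinuous _ 1 fun n =>
      lipschitzWith_birkhoffAverage_apply f n x).equicontinuous.isClosed_setOfPred_tendsto
    (lipschitzWith_integral_continuousMap μ).continuous

end BirkhoffAverage

namespace AddCircle

variable {T : ℝ}

theorem birkhoffAverage_add_fourier (a x : AddCircle T) (k : ℤ) (n : ℕ) :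
    birkhoffAverage ℂ (· + a) (fourier k) n x =
      fourier k x * ((n : ℂ)⁻¹ * ∑ j ∈ Finset.range n, fourier k a ^ j) := by
  simp only [birkhoffAverage, birkhoffSum, add_right_iterate_apply, smul_eq_mul, fourier_apply,
    smul_add, smul_comm k, toCircle_add, toCircle_nsmul, Circle.coe_mul, Circle.coe_pow,
    Finset.mul_sum]
  exact Finset.sum_congr rfl fun _ _ => mul_left_comm _ _ _

variable [hT : Fact (0 < T)]

theorem fourier_apply_ne_one {a : AddCircle T} (ha : ¬IsOfFinAddOrder a) {k : ℤ} (hk : k ≠ 0) :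
    fourier k a ≠ 1 := by
  intro h
  have hka : toCircle (k • a) = toCircle (0 : AddCircle T) := by
    rw [toCircle_zero]; exact Circle.coe_eq_one.mp h
  exact ha (isOfFinAddOrder_iff_zsmul_eq_zero.mpr ⟨k, hk, injective_toCircle hT.out.ne' hka⟩)

theorem fourier_mem_birkhoffAverageTendstoIntegralSubmodule {a : AddCircle T}
    (ha : ¬IsOfFinAddOrder a) (k : ℤ) (x : AddCircle T) :
    fourier k ∈ birkhoffAverageTendstoIntegralSubmodule ℂ haarAddCircle (· + a) x := by
  change Tendsto _ _ _
  simp_rw [birkhoffAverage_add_fourier]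
  rcases eq_or_ne k 0 with rfl | hk
  · simp only [fourier_zero, one_pow, Finset.sum_const, Finset.card_range, nsmul_eq_mul, mul_one,
      one_mul, integral_const, probReal_univ, one_smul]
    exact tendsto_const_nhds.congr' <| (eventually_ne_atTop 0).mono fun n hn =>
      (inv_mul_cancel₀ (Nat.cast_ne_zero.mpr hn)).symm
  · rw [integral_eq_zero_of_add_right_eq_neg (fourier_add_half_inv_index hk hT.out),
      ← mul_zero (fourier k x)]
    exact (tendsto_inv_mul_geom_sum_of_norm_le_one (Circle.norm_coe _).le
      (fourier_apply_ne_one ha hk)).const_mul _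

theorem tendsto_birkhoffAverage_add_integral {a : AddCircle T} (ha : ¬IsOfFinAddOrder a)
    (g : C(AddCircle T, ℂ)) (x : AddCircle T) :
    Tendsto (birkhoffAverage ℂ (· + a) g · x) atTop (𝓝 (∫ y, g y ∂haarAddCircle)) := by
  have hspan : Submodule.span ℂ (Set.range fourier) ≤
      birkhoffAverageTendstoIntegralSubmodule ℂ haarAddCircle (· + a) x :=
    Submodule.span_le.mpr <| Set.range_subset_iff.mpr fun k =>
      fourier_mem_birkhoffAverageTendstoIntegralSubmodule ha k x
  have hclosure := Submodule.topologicalClosure_minimal _ hspan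
    (isClosed_birkhoffAverageTendstoIntegralSubmodule ℂ haarAddCircle _ x)
  rw [span_fourier_closure_eq_top] at hclosure
  exact hclosure Submodule.mem_top

end AddCircle

theorem Function.Periodic.tendsto_birkhoffAverage_add {F : ℝ → ℝ} {T Δt : ℝ}
    (hF : Function.Periodic F T) (hT : 0 < T) (hcont : Continuous F)
    (hΔt : Irrational (Δt / T)) (s : ℝ) :
    Tendsto (birkhoffAverage ℝ (· + Δt) F · s) atTop (𝓝 (T⁻¹ * ∫ t in 0..T, F t)) := by
  have : Fact (0 < T) := ⟨hT⟩
  let G : C(AddCircle T, ℂ) :=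
    ⟨(hF.comp ((↑) : ℝ → ℂ)).lift, (Complex.continuous_ofReal.comp hcont).quotient_liftOn' _⟩
  have hG (t : ℝ) : G t = F t := (hF.comp ((↑) : ℝ → ℂ)).lift_coe t
  have ha : ¬IsOfFinAddOrder (Δt : AddCircle T) :=
    AddCircle.not_isOfFinAddOrder_iff_forall_rat_ne_div.mpr fun q hq => hΔt ⟨q, hq⟩
  have hsample (n : ℕ) : birkhoffAverage ℂ (· + (Δt : AddCircle T)) G n s =
      birkhoffAverage ℝ (· + Δt) F n s := by
    simp only [birkhoffAverage, birkhoffSum, add_right_iterate_apply, ← QuotientAddGroup.mk_nsmul,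
      ← QuotientAddGroup.mk_add, hG, smul_eq_mul]
    push_cast
    rfl
  have hmean : ∫ y, G y ∂AddCircle.haarAddCircle = ((T⁻¹ * ∫ t in 0..T, F t : ℝ) : ℂ) := by
    rw [AddCircle.integral_haarAddCircle, ← AddCircle.intervalIntegral_preimage T 0, zero_add]
    simp only [hG, intervalIntegral.integral_ofReal, Complex.real_smul, Complex.ofReal_mul,
      Complex.ofReal_inv]
  have key := AddCircle.tendsto_birkhoffAverage_add_integral ha G s
  simp only [hsample, hmean] at key
  exact tendsto_ofReal_iff.mp key

/-- Every continuous periodic signal has sampling stationarity with respect to all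
sampling intervals except for a set of intervals of Lebesgue measure zero: the set of
`Δt ∈ (0,∞)` for which the sample averages fail (for some shift `s` and continuous `g`)
to converge to the waveform average has Lebesgue measure zero. -/
theorem sampling_stationarity_ae_sampling_interval
    (h : ℝ → ℝ) (T : ℝ) (hT : 0 < T) (hcont : Continuous h)
    (hper : ∀ t : ℝ, h (t + T) = h t) :
    volume {Δt : ℝ | Δt ∈ Set.Ioi (0:ℝ) ∧
      ¬ (∀ s : ℝ, ∀ g : ℝ → ℝ, Continuous g →
          Tendsto
            (fun N : ℕ => (1 / (N : ℝ)) * ∑ n ∈ Finset.range N, g (h (n * Δt + s)))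
            atTop
            (nhds ((1 / T) * ∫ t in (0:ℝ)..T, g (h t))))} = 0 := by
  refine measure_mono_null ?_ ((Set.countable_range fun q : ℚ => (q : ℝ) * T).measure_zero _)
  rintro Δt ⟨-, hbad⟩
  by_contra hrational
  refine hbad fun s g hg => ?_
  have hΔt : Irrational (Δt / T) := by
    rintro ⟨q, hq⟩
    exact hrational ⟨q, by simp only [hq, div_mul_cancel₀ _ hT.ne']⟩
  convert (Function.Periodic.comp hper g).tendsto_birkhoffAverage_add hT (hg.comp hcont) hΔt s
    using 2 with N
  · simp [birkhoffAverage, birkhoffSum, add_comm s, mul_comm]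
  · rw [one_div]; rfl
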